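/- Let λ₁, …, λ_m be the eigenvalues of the shape operator of an isoparametric hypersurface in S^{m+1} with at most two distinct principal curvatures, written as λ₁ with multiplicity m₁ and λ₂ with multiplicity m₂ = m - m₁, where λ₁λ₂ = -1 (Cartan's relation for two distinct constant principal curvatures). If additionally m₁λ₁² + m₂λ₂² = m and m₁λ₁ + m₂λ₂ ≠ 0, then λ₁² = 1 (so λ₁ = ±1, λ₂ = ∓1) and m₁ ≠ m₂. -/
import Mathlib


/-- For an isoparametric hypersurface of `S^{m+1}` with two distinct principal curvatures
`λ₁, λ₂` of multiplicities `m₁, m₂` (`m₁ + m₂ = m`), Cartan's relation `λ₁λ₂ = -1`,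
the biharmonic condition `m₁λ₁² + m₂λ₂² = m` and non-minimality `m₁λ₁ + m₂λ₂ ≠ 0`
force `λ₁² = 1` and `m₁ ≠ m₂`. -/
theorem isoparametric_biharmonic_two_curvatures
    (m m₁ m₂ : ℕ) (hm₁ : 1 ≤ m₁) (hm₂ : 1 ≤ m₂) (hsum : m₁ + m₂ = m)
    (lam1 lam2 : ℝ) (hne : lam1 ≠ lam2)
    (hCartan : lam1 * lam2 = -1)
    (hA2 : (m₁ : ℝ) * lam1^2 + (m₂ : ℝ) * lam2^2 = (m : ℝ))
    (htr : (m₁ : ℝ) * lam1 + (m₂ : ℝ) * lam2 ≠ 0) :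
    lam1^2 = 1 ∧ m₁ ≠ m₂ := by
  subst hsum
  push_cast at hA2
  have h0 : lam1 ≠ 0 := by
    intro h; rw [h] at hCartan; simp at hCartan
  have hl2 : lam2 = -(1 / lam1) := by
    field_simp
    linarith [hCartan]
  subst hl2
  have hfac : (lam1 ^ 2 - 1) * ((m₁ : ℝ) * lam1 ^ 2 - m₂) = 0 := by
    have h2 : lam1 ^ 2 ≠ 0 := pow_ne_zero 2 h0
    field_simp at hA2
    nlinarith [hA2, sq_nonneg lam1]
  have hsq : lam1 ^ 2 = 1 := by
    rcases mul_eq_zero.1 hfac with h | h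
    · linarith
    · exfalso
      apply htr
      field_simp
      nlinarith [h]
  refine ⟨hsq, ?_⟩
  intro heq
  subst heq
  apply htr
  have : (1 / lam1) = lam1 := by
    field_simp
    nlinarith [hsq]
  rw [this]
  ring
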